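/- arXiv:2508.21318 — 2 statements merged into one kernel-verified Lean document; each statement's English description precedes it below -/
import Mathlib

section
/- For every positive integer N, the polynomial identity ∑_{j=1}^{N+1} (j-1)! · S(N+2-j, j) · z^{N+1-j} = ∑_{j=1}^{N-1} j! · S(N-j, j) · z^{N-j} + ∑_{j=1}^{N} j! · S(N+1-j, j) · z^{N+1-j} holds, where S(n,m) denotes the Stirling numbers of the second kind. -/
/-- Stirling numbers of the second kind. -/
def stirling2 : ℕ → ℕ → ℕ
  | 0, 0 => 1
  | 0, _ + 1 => 0
  | _ + 1, 0 => 0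
  | n + 1, m + 1 => (m + 1) * stirling2 n (m + 1) + stirling2 n m

/-!
Apply the recurrence `S(n+1, m+1) = (m+1) S(n, m+1) + S(n, m)` to each coefficient on the left,
multiplied by `m!`: it splits into `(m+1)! S(n, m+1) + m! S(n, m)`. The first parts give the
second sum on the right, the second parts (after shifting the index) the first one; the extra
boundary terms vanish because `S(0, m) = 0` for `m ≥ 1` and `S(N, 0) = 0` for `N ≥ 1`.
-/

open Finset Polynomial Nat

lemma stirling2_succ_succ (n m : ℕ) :
    stirling2 (n + 1) (m + 1) = (m + 1) * stirling2 n (m + 1) + stirling2 n m := rfl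

lemma stirling2_zero_left {m : ℕ} (hm : m ≠ 0) : stirling2 0 m = 0 := by
  obtain ⟨m, rfl⟩ := exists_eq_succ_of_ne_zero hm
  rfl

lemma stirling2_zero_right {n : ℕ} (hn : n ≠ 0) : stirling2 n 0 = 0 := by
  obtain ⟨n, rfl⟩ := exists_eq_succ_of_ne_zero hn
  rfl

lemma factorial_mul_stirling2_succ_succ (n m : ℕ) :
    m ! * stirling2 (n + 1) (m + 1) = (m + 1)! * stirling2 n (m + 1) + m ! * stirling2 n m := by
  rw [stirling2_succ_succ, factorial_succ]
  ring

theorem stmt0 (N : ℕ) (hN : 1 ≤ N) :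
    ∑ j ∈ Finset.Icc 1 (N + 1),
        (Polynomial.C ((Nat.factorial (j - 1) * stirling2 (N + 2 - j) j : ℕ) : ℤ)) *
          Polynomial.X ^ (N + 1 - j) =
      (∑ j ∈ Finset.Icc 1 (N - 1),
          (Polynomial.C ((Nat.factorial j * stirling2 (N - j) j : ℕ) : ℤ)) *
            Polynomial.X ^ (N - j)) +
        ∑ j ∈ Finset.Icc 1 N,
          (Polynomial.C ((Nat.factorial j * stirling2 (N + 1 - j) j : ℕ) : ℤ)) *
            Polynomial.X ^ (N + 1 - j) := by
  set f : ℕ → ℤ[X] := fun j ↦ C ((j ! * stirling2 (N + 1 - j) j : ℕ) : ℤ) * X ^ (N + 1 - j)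
  set g : ℕ → ℤ[X] := fun k ↦ C ((k ! * stirling2 (N - k) k : ℕ) : ℤ) * X ^ (N - k)
  have split : ∀ j ∈ Icc 1 (N + 1),
      C (((j - 1)! * stirling2 (N + 2 - j) j : ℕ) : ℤ) * X ^ (N + 1 - j) = g (j - 1) + f j := by
    intro j hj
    obtain ⟨hj1, hjN⟩ := mem_Icc.mp hj
    obtain ⟨m, rfl⟩ : ∃ m, j = m + 1 := ⟨j - 1, by omega⟩
    obtain ⟨n, hn⟩ : ∃ n, N = n + m := ⟨N - m, by omega⟩
    simp only [f, g, hn, show n + m + 2 - (m + 1) = n + 1 by omega,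
      show n + m + 1 - (m + 1) = n by omega,
      add_tsub_cancel_right, factorial_mul_stirling2_succ_succ]
    rw [Nat.cast_add, C_add, add_mul, add_comm]
  have hf : ∑ j ∈ Icc 1 (N + 1), f j = ∑ j ∈ Icc 1 N, f j := by
    rw [sum_Icc_succ_top (by omega), add_eq_left]
    simp [f, stirling2_zero_left]
  have hg : ∑ j ∈ Icc 1 (N + 1), g (j - 1) = ∑ k ∈ Icc 1 (N - 1), g k := by
    have shift : Icc 1 (N + 1) = Ico (0 + 1) (N + 1 + 1) := by
      ext; simp only [mem_Icc, mem_Ico]; omega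
    rw [shift, sum_Ico_add_right_sub_eq, ← range_eq_Ico]
    refine (sum_subset (fun k hk ↦ by simp only [mem_Icc, mem_range] at hk ⊢; omega)
      fun k hk hk' ↦ ?_).symm
    obtain rfl | rfl : k = 0 ∨ k = N := by simp only [mem_Icc, mem_range] at hk hk'; omega
    · simp [g, stirling2_zero_right (n := N) (by omega)]
    · simp [g, stirling2_zero_left (m := k) (by omega)]
  rw [sum_congr rfl split, sum_add_distrib, hf, hg]
end

section
/- For every n ≥ 1, the map appending a repeated last entry gives a bijection from the set of inversion sequences e of length n avoiding the pattern (-,-,=) with e_{n-1} ≠ e_n (when n ≥ 2; for n = 1 the condition is vacuous), onto the set of inversion sequences ẽ of length n+1 avoiding (-,-,=) with ẽ_n = ẽ_{n+1}. Moreover this bijection preserves the number of distinct entries. -/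
/-- `e` is an inversion sequence: `0 ≤ e_i < i` (0-indexed: `e i ≤ i`). -/
def IsInvSeq {n : ℕ} (e : Fin n → ℕ) : Prop := ∀ i : Fin n, e i ≤ i.1

/-- `e` avoids the pattern (-,-,=): no `i < j < k` with `e i = e k`. -/
def AvoidsEq {n : ℕ} (e : Fin n → ℕ) : Prop :=
  ¬ ∃ i j k : Fin n, i < j ∧ j < k ∧ e i = e k

/-- The map appending a repeated copy of the last entry. -/
def extendLast (n : ℕ) (hn : 0 < n) (e : Fin n → ℕ) : Fin (n + 1) → ℕ :=
  fun i => if h : i.1 < n then e ⟨i.1, h⟩ else e ⟨n - 1, by omega⟩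

/-!
A sequence avoids (-,-,=) exactly when equal entries only occur in adjacent positions.
Appending a copy of the last entry `e_n` creates a new coincidence at distance at least two
precisely with an earlier occurrence of `e_n`, which in an avoiding sequence can only be
`e_{n-1}`. Deleting the last entry is the inverse map, and neither map changes the set of values.
-/

lemma avoidsEq_iff {n : ℕ} {e : Fin n → ℕ} :
    AvoidsEq e ↔ ∀ i k : Fin n, i.1 + 1 < k.1 → e i ≠ e k := by
  refine ⟨fun he i k hik hik' => he ⟨i, ⟨i.1 + 1, by omega⟩, k, ?_, ?_, hik'⟩, ?_⟩
  · exact Fin.lt_def.2 (Nat.lt_succ_self _)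
  · exact Fin.lt_def.2 hik
  · rintro he ⟨i, j, k, hij, hjk, hik⟩
    exact he i k (by omega) hik

lemma AvoidsEq.comp_strictMono {m n : ℕ} {e : Fin n → ℕ} (he : AvoidsEq e)
    {g : Fin m → Fin n} (hg : StrictMono g) : AvoidsEq (e ∘ g) :=
  fun ⟨i, j, k, hij, hjk, hik⟩ => he ⟨g i, g j, g k, hg hij, hg hjk, hik⟩

lemma IsInvSeq.init {n : ℕ} {f : Fin (n + 1) → ℕ} (hf : IsInvSeq f) : IsInvSeq (Fin.init f) :=
  fun i => hf i.castSucc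

lemma AvoidsEq.init {n : ℕ} {f : Fin (n + 1) → ℕ} (hf : AvoidsEq f) : AvoidsEq (Fin.init f) :=
  hf.comp_strictMono Fin.strictMono_castSucc

section extendLast

variable {n : ℕ} (hn : 0 < n)

@[simp]
lemma extendLast_castSucc (e : Fin n → ℕ) (i : Fin n) : extendLast n hn e i.castSucc = e i := by
  simp [extendLast]

@[simp]
lemma extendLast_last (e : Fin n → ℕ) :
    extendLast n hn e (Fin.last n) = e ⟨n - 1, Nat.sub_lt hn one_pos⟩ := by
  simp [extendLast]

lemma init_extendLast (e : Fin n → ℕ) : Fin.init (extendLast n hn e) = e :=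
  funext (extendLast_castSucc hn e)

lemma extendLast_injective : Function.Injective (extendLast n hn) := fun e₁ e₂ h => by
  rw [← init_extendLast hn e₁, h, init_extendLast]

lemma extendLast_init {f : Fin (n + 1) → ℕ}
    (hf : f ⟨n - 1, Nat.sub_lt_succ n 1⟩ = f (Fin.last n)) :
    extendLast n hn (Fin.init f) = f := by
  funext i
  induction i using Fin.lastCases with
  | last => exact (extendLast_last hn _).trans hf
  | cast j => exact extendLast_castSucc hn _ j

lemma image_extendLast (e : Fin n → ℕ) :
    Finset.univ.image (extendLast n hn e) = Finset.univ.image e := by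
  ext v
  simp only [Finset.mem_image, Finset.mem_univ, true_and, Fin.exists_fin_succ',
    extendLast_castSucc, extendLast_last, or_iff_left_iff_imp]
  exact fun h => ⟨_, h⟩

lemma IsInvSeq.extendLast {e : Fin n → ℕ} (he : IsInvSeq e) : IsInvSeq (extendLast n hn e) := by
  intro i
  induction i using Fin.lastCases with
  | last => simpa using (he _).trans (Nat.sub_le n 1)
  | cast j => simpa using he j

lemma AvoidsEq.extendLast {e : Fin n → ℕ} (he : AvoidsEq e)
    (hne : 2 ≤ n →
      e ⟨n - 2, Nat.sub_lt hn two_pos⟩ ≠ e ⟨n - 1, Nat.sub_lt hn one_pos⟩) :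
    AvoidsEq (extendLast n hn e) := by
  rw [avoidsEq_iff] at he ⊢
  intro i k hik
  induction i using Fin.lastCases with
  | last => exact absurd k.2 (by rw [Fin.val_last] at hik; omega)
  | cast i =>
    induction k using Fin.lastCases with
    | cast k => simpa using he i k hik
    | last =>
      simp only [extendLast_castSucc, extendLast_last]
      by_cases hi : i.1 + 1 < n - 1
      · exact he i ⟨n - 1, by omega⟩ hi
      · simp only [Fin.val_castSucc, Fin.val_last] at hik
        have h2 : 2 ≤ n := by omega
        rw [show i = ⟨n - 2, by omega⟩ from Fin.ext (by simp only; omega)]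
        exact hne h2

end extendLast

/-- Appending a repeated last entry is a bijection from length-`n`
(-,-,=)-avoiding inversion sequences whose last two entries differ
(vacuous for `n = 1`) onto length-`n+1` (-,-,=)-avoiding inversion
sequences whose last two entries are equal, and it preserves the number
of distinct entries. -/
theorem stmt3 (n : ℕ) (hn : 0 < n) :
    Set.BijOn (extendLast n hn)
      {e : Fin n → ℕ | IsInvSeq e ∧ AvoidsEq e ∧
        ∀ h : 2 ≤ n, e ⟨n - 2, by omega⟩ ≠ e ⟨n - 1, by omega⟩}
      {f : Fin (n + 1) → ℕ | IsInvSeq f ∧ AvoidsEq f ∧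
        f ⟨n - 1, by omega⟩ = f ⟨n, by omega⟩} ∧
    ∀ e : Fin n → ℕ,
      e ∈ {e : Fin n → ℕ | IsInvSeq e ∧ AvoidsEq e ∧
        ∀ h : 2 ≤ n, e ⟨n - 2, by omega⟩ ≠ e ⟨n - 1, by omega⟩} →
      (Finset.image (extendLast n hn e) Finset.univ).card =
        (Finset.image e Finset.univ).card := by
  refine ⟨⟨?_, (extendLast_injective hn).injOn, ?_⟩, fun e _ => by rw [image_extendLast]⟩
  · rintro e ⟨hinv, havd, hne⟩
    exact ⟨hinv.extendLast hn, havd.extendLast hn hne,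
      (extendLast_castSucc hn e ⟨n - 1, by omega⟩).trans (extendLast_last hn e).symm⟩
  · rintro f ⟨hinv, havd, hlast⟩
    refine ⟨Fin.init f, ⟨hinv.init, havd.init, fun h2 hinit => ?_⟩,
      extendLast_init hn hlast⟩
    have hgap : n - 2 + 1 < (Fin.last n).1 := by rw [Fin.val_last]; omega
    exact avoidsEq_iff.1 havd ⟨n - 2, by omega⟩ (Fin.last n) hgap (hinit.trans hlast)
end
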